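/- arXiv:1405.6363 — 12 statements merged into one kernel-verified Lean document; each statement's English description precedes it below -/
import Mathlib

section
/- Let m be an even positive integer and let 𝒞 be the order m dimension n symmetric Cauchy tensor with generating vector c ∈ ℝ^n. Then 𝒞 is positive semi-definite if and only if c_i > 0 for every i ∈ {1,…,n}. -/
/-!
Necessity: at the standard basis vector `e_k` the form equals `1 / (m c_k)`.
Sufficiency: when every denominator `s = c_{i_1} + ⋯ + c_{i_m}` is positive, writing
`1 / s = ∫₀¹ t ^ (s - 1) dt` turns the form into `∫₀¹ (∑ₖ xₖ t ^ cₖ) ^ m / t dt`,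
whose integrand is nonnegative for even `m`.
-/

open Finset

section CauchyForm

variable {ι : Type*} [Fintype ι]

noncomputable def cauchyForm (c : ι → ℝ) (m : ℕ) (x : ι → ℝ) : ℝ :=
  ∑ i : Fin m → ι, (∏ j, x (i j)) / ∑ j, c (i j)

theorem cauchyForm_single [DecidableEq ι] (c : ι → ℝ) (m : ℕ) (k : ι) :
    cauchyForm c m (Pi.single k 1) = (m * c k)⁻¹ := by
  rw [cauchyForm, Fintype.sum_eq_single (fun _ => k)]
  · simp
  · intro i hi
    obtain ⟨j, hj⟩ : ∃ j, i j ≠ k := by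
      by_contra! h
      exact hi (funext h)
    rw [prod_eq_zero (mem_univ j) (by simp [hj]), zero_div]

theorem div_eq_integral_mul_rpow (a : ℝ) {s : ℝ} (hs : 0 < s) :
    a / s = ∫ t in (0 : ℝ)..1, a * t ^ (s - 1) := by
  rw [intervalIntegral.integral_const_mul, integral_rpow (Or.inl (by linarith)),
    sub_add_cancel, Real.one_rpow, Real.zero_rpow hs.ne', sub_zero, div_eq_mul_one_div]

theorem cauchyForm_eq_integral {c : ι → ℝ} {m : ℕ} (hc : ∀ i : Fin m → ι, 0 < ∑ j, c (i j))
    (x : ι → ℝ) :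
    cauchyForm c m x =
      ∫ t in (0 : ℝ)..1, ∑ i : Fin m → ι, (∏ j, x (i j)) * t ^ ((∑ j, c (i j)) - 1) := by
  rw [intervalIntegral.integral_finsetSum fun i _ =>
    (intervalIntegral.intervalIntegrable_rpow' (by linarith [hc i])).const_mul _]
  exact sum_congr rfl fun i _ => div_eq_integral_mul_rpow _ (hc i)

theorem sum_prod_mul_rpow_eq_pow_div (c x : ι → ℝ) (m : ℕ) {t : ℝ} (ht : 0 < t) :
    ∑ i : Fin m → ι, (∏ j, x (i j)) * t ^ ((∑ j, c (i j)) - 1) =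
      (∑ k, x k * t ^ c k) ^ m / t := by
  rw [← Fin.prod_const, Fintype.prod_sum, sum_div]
  refine sum_congr rfl fun i _ => ?_
  rw [Real.rpow_sub_one ht.ne', Real.rpow_sum_of_pos ht, prod_mul_distrib, mul_div_assoc]

theorem cauchyForm_nonneg {c : ι → ℝ} {m : ℕ} (hm : Even m)
    (hc : ∀ i : Fin m → ι, 0 < ∑ j, c (i j)) (x : ι → ℝ) : 0 ≤ cauchyForm c m x := by
  rw [cauchyForm_eq_integral hc, intervalIntegral.integral_of_le zero_le_one]
  refine MeasureTheory.setIntegral_nonneg measurableSet_Ioc fun t ht => ?_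
  rw [sum_prod_mul_rpow_eq_pow_div c x m ht.1]
  exact div_nonneg (hm.pow_nonneg _) ht.1.le

end CauchyForm

theorem cauchy_tensor_psd_iff_generating_vector_pos_general
    (m n : ℕ) (hme : Even m) (c : Fin n → ℝ)
    (hc : ∀ i : Fin m → Fin n, (∑ j, c (i j)) ≠ 0) :
    (∀ x : Fin n → ℝ,
        0 ≤ ∑ i : Fin m → Fin n, (∏ j, x (i j)) / (∑ j, c (i j))) ↔
      (∀ i, 0 < c i) := by
  change (∀ x, 0 ≤ cauchyForm c m x) ↔ _
  constructor
  · intro hpsd k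
    have hmk : (m : ℝ) * c k ≠ 0 := by simpa using hc fun _ => k
    have hmk_nonneg : 0 ≤ (m : ℝ) * c k := by
      simpa only [cauchyForm_single, inv_nonneg] using hpsd (Pi.single k 1)
    exact pos_of_mul_pos_right (lt_of_le_of_ne hmk_nonneg hmk.symm) m.cast_nonneg
  · intro hpos
    exact cauchyForm_nonneg hme fun i =>
      lt_of_le_of_ne (sum_nonneg fun j _ => (hpos (i j)).le) (hc i).symm

/-- An even order symmetric Cauchy tensor with generating vector `c`
is positive semi-definite iff every entry of `c` is positive. -/
theorem cauchy_tensor_psd_iff_generating_vector_pos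
    (m n : ℕ) (hm : 0 < m) (hme : Even m) (c : Fin n → ℝ)
    (hc : ∀ i : Fin m → Fin n, (∑ j, c (i j)) ≠ 0) :
    (∀ x : Fin n → ℝ,
        0 ≤ ∑ i : Fin m → Fin n, (∏ j, x (i j)) / (∑ j, c (i j))) ↔
      (∀ i, 0 < c i) :=
  cauchy_tensor_psd_iff_generating_vector_pos_general m n hme c hc
end

section
/- Let m be an even positive integer and let 𝒞 be the order m dimension n symmetric Cauchy tensor with generating vector c ∈ ℝ^n satisfying c_i > 0 for all i. If λ ∈ ℝ and x ∈ ℝ^n with x ≠ 0 satisfy the H-eigenvalue equation Σ_{i_2,…,i_m=1}^n x_{i_2}⋯x_{i_m}/(c_i + c_{i_2}+⋯+c_{i_m}) = λ x_i^{m-1} for every i ∈ {1,…,n}, then λ ≥ 0. -/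
/-! Since `1 / p = ∫₀¹ t ^ (p - 1) dt` for `p > 0`, expanding the power of a sum gives
`𝒞x^m = ∫₀¹ t⁻¹ (∑ᵢ xᵢ t ^ cᵢ) ^ m dt`, which is nonnegative for even `m`. On the other hand
the eigenvalue equation gives `𝒞x^m = ∑ᵢ xᵢ (𝒞x^{m-1})ᵢ = λ ∑ᵢ xᵢ ^ m`, and `∑ᵢ xᵢ ^ m > 0`. -/

open intervalIntegral

section CauchySum

variable {ι : Type*} [Fintype ι]

/-- `cauchySum c x (m - 1) (c i)` is `(𝒞x^{m-1})ᵢ` and `cauchySum c x m 0` is `𝒞x^m`. -/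
noncomputable def cauchySum (c x : ι → ℝ) (k : ℕ) (a : ℝ) : ℝ :=
  ∑ t : Fin k → ι, (∏ j, x (t j)) / (a + ∑ j, c (t j))

theorem cauchySum_succ (c x : ι → ℝ) (k : ℕ) (a : ℝ) :
    cauchySum c x (k + 1) a = ∑ i, x i * cauchySum c x k (a + c i) := by
  rw [cauchySum, ← (Fin.consEquiv fun _ => ι).sum_comp, Fintype.sum_prod_type]
  refine Fintype.sum_congr _ _ fun i => ?_
  rw [cauchySum, Finset.mul_sum]
  refine Fintype.sum_congr _ _ fun t => ?_
  simp only [Fin.consEquiv_apply, Fin.prod_univ_succ, Fin.sum_univ_succ, Fin.cons_zero,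
    Fin.cons_succ, add_assoc]
  ring

theorem integral_rpow_sub_one {p : ℝ} (hp : 0 < p) : ∫ t in (0 : ℝ)..1, t ^ (p - 1) = 1 / p := by
  rw [integral_rpow (Or.inl (by linarith)), sub_add_cancel, Real.one_rpow,
    Real.zero_rpow hp.ne']
  ring

theorem rpow_mul_sum_pow_eq_sum {t : ℝ} (ht : 0 < t) (c x : ι → ℝ) (k : ℕ) (a : ℝ) :
    t ^ (a - 1) * (∑ i, x i * t ^ c i) ^ k
      = ∑ s : Fin k → ι, (∏ j, x (s j)) * t ^ (a + ∑ j, c (s j) - 1) := by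
  rw [Fintype.sum_pow, Finset.mul_sum]
  refine Fintype.sum_congr _ _ fun s => ?_
  rw [Finset.prod_mul_distrib, ← Real.rpow_sum_of_pos ht, add_sub_right_comm,
    Real.rpow_add ht]
  ring

theorem cauchySum_eq_integral {c : ι → ℝ} (hc : ∀ i, 0 < c i) (x : ι → ℝ) {k : ℕ} (hk : 0 < k)
    {a : ℝ} (ha : 0 ≤ a) :
    cauchySum c x k a = ∫ t in (0 : ℝ)..1, t ^ (a - 1) * (∑ i, x i * t ^ c i) ^ k := by
  have hpos (s : Fin k → ι) : 0 < a + ∑ j, c (s j) :=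
    add_pos_of_nonneg_of_pos ha <|
      Finset.sum_pos (fun j _ => hc (s j)) ⟨⟨0, hk⟩, Finset.mem_univ _⟩
  have hexpand : ∫ t in (0 : ℝ)..1, t ^ (a - 1) * (∑ i, x i * t ^ c i) ^ k
      = ∫ t in (0 : ℝ)..1, ∑ s : Fin k → ι, (∏ j, x (s j)) * t ^ (a + ∑ j, c (s j) - 1) := by
    refine integral_congr_ae (Filter.Eventually.of_forall fun t ht => ?_)
    rw [Set.uIoc_of_le zero_le_one] at ht
    exact rpow_mul_sum_pow_eq_sum ht.1 c x k a
  rw [hexpand, integral_finsetSum fun s _ =>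
    (intervalIntegrable_rpow' (by linarith [hpos s])).const_mul _]
  refine Fintype.sum_congr _ _ fun s => ?_
  rw [integral_const_mul, integral_rpow_sub_one (hpos s), mul_one_div]

theorem cauchySum_nonneg_of_even {c : ι → ℝ} (hc : ∀ i, 0 < c i) (x : ι → ℝ) {k : ℕ}
    (hk : 0 < k) (hke : Even k) {a : ℝ} (ha : 0 ≤ a) : 0 ≤ cauchySum c x k a := by
  rw [cauchySum_eq_integral hc x hk ha]
  exact integral_nonneg zero_le_one fun t ht =>
    mul_nonneg (Real.rpow_nonneg ht.1 _) (hke.pow_nonneg _)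

end CauchySum

/-- Every H-eigenvalue of an even order symmetric Cauchy tensor with
positive generating vector is nonnegative. -/
theorem cauchy_tensor_H_eigenvalue_nonneg
    (m n : ℕ) (hm : 0 < m) (hme : Even m) (c : Fin n → ℝ)
    (hc : ∀ i, 0 < c i)
    (lam : ℝ) (x : Fin n → ℝ) (hx : x ≠ 0)
    (heig : ∀ i : Fin n,
        (∑ t : Fin (m - 1) → Fin n, (∏ j, x (t j)) / (c i + ∑ j, c (t j)))
          = lam * (x i) ^ (m - 1)) :
    0 ≤ lam := by
  obtain ⟨k, rfl⟩ : ∃ k, m = k + 1 := ⟨m - 1, (Nat.succ_pred_eq_of_pos hm).symm⟩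
  have heig' : ∀ i, cauchySum c x k (c i) = lam * x i ^ k := heig
  have hform : cauchySum c x (k + 1) 0 = lam * ∑ i, x i ^ (k + 1) := by
    simp only [cauchySum_succ, zero_add, Finset.mul_sum]
    exact Fintype.sum_congr _ _ fun i => by rw [heig' i, pow_succ]; ring
  have hnonneg := cauchySum_nonneg_of_even hc x k.succ_pos hme le_rfl
  obtain ⟨i₀, hi₀⟩ := Function.ne_iff.mp hx
  have hpow : 0 < ∑ i, x i ^ (k + 1) :=
    Finset.sum_pos' (fun i _ => hme.pow_nonneg _) ⟨i₀, Finset.mem_univ _, hme.pow_pos hi₀⟩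
  exact nonneg_of_mul_nonneg_left (hform ▸ hnonneg) hpow
end

section
/- Let m be an even positive integer and let 𝒞 be the order m dimension n symmetric Cauchy tensor with generating vector c ∈ ℝ^n satisfying c_i > 0 for all i. If λ ∈ ℝ and x ∈ ℝ^n satisfy the Z-eigenvalue system Σ_{i_2,…,i_m=1}^n x_{i_2}⋯x_{i_m}/(c_i + c_{i_2}+⋯+c_{i_m}) = λ x_i for every i ∈ {1,…,n} together with xᵀx = 1, then λ ≥ 0. -/
/-!
Writing `1 / a = ∫₀¹ t ^ (a - 1) dt` for each `a = c_{i_1} + ⋯ + c_{i_m} > 0` turns the form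
`𝒞 x^m` into `∫₀¹ (∑ i, x i * t ^ c i) ^ m / t dt`, which is nonnegative when `m` is even.
Contracting the eigenvalue equation with `x` gives `λ = λ xᵀx = 𝒞 x^m`.
-/

open Finset intervalIntegral MeasureTheory

lemma integral_rpow_sub_one_eq_inv {a : ℝ} (ha : 0 < a) :
    ∫ t in (0 : ℝ)..1, t ^ (a - 1) = a⁻¹ := by
  rw [integral_rpow (Or.inl (by linarith)), sub_add_cancel, Real.one_rpow,
    Real.zero_rpow ha.ne', sub_zero, one_div]

lemma Fintype.sum_sum_cons {M : Type*} [AddCommMonoid M] {ι : Type*} [Fintype ι] {k : ℕ}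
    (F : (Fin (k + 1) → ι) → M) :
    ∑ i, ∑ t : Fin k → ι, F (Fin.cons i t) = ∑ s, F s := by
  rw [← Fintype.sum_prod_type']
  exact Fintype.sum_equiv (Fin.consEquiv fun _ => ι) _ _ fun _ => rfl

section CauchyForm

variable {ι : Type*} [Fintype ι] {c : ι → ℝ}

lemma sum_prod_div_sum_eq_integral (hc : ∀ i, 0 < c i) (x : ι → ℝ) (k : ℕ) :
    ∑ s : Fin (k + 1) → ι, (∏ j, x (s j)) / ∑ j, c (s j) =
      ∫ t in (0 : ℝ)..1, (∑ i, x i * t ^ c i) ^ (k + 1) * t⁻¹ := by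
  have hpos : ∀ s : Fin (k + 1) → ι, 0 < ∑ j, c (s j) := fun s =>
    sum_pos (fun j _ => hc (s j)) univ_nonempty
  have hterm : ∀ s : Fin (k + 1) → ι, (∏ j, x (s j)) / ∑ j, c (s j) =
      ∫ t in (0 : ℝ)..1, (∏ j, x (s j)) * t ^ (∑ j, c (s j) - 1) := fun s => by
    rw [intervalIntegral.integral_const_mul, integral_rpow_sub_one_eq_inv (hpos s),
      div_eq_mul_inv]
  simp_rw [hterm]
  rw [← integral_finsetSum fun s _ =>
      (intervalIntegrable_rpow' (by linarith [hpos s])).const_mul _,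
    integral_of_le zero_le_one, integral_of_le zero_le_one]
  refine setIntegral_congr_fun measurableSet_Ioc fun t ht => ?_
  rw [Fintype.sum_pow, sum_mul]
  refine sum_congr rfl fun s _ => ?_
  rw [Real.rpow_sub ht.1, Real.rpow_one, Real.rpow_sum_of_pos ht.1, prod_mul_distrib]
  ring

lemma sum_prod_div_sum_nonneg_of_even (hc : ∀ i, 0 < c i) (x : ι → ℝ) {m : ℕ}
    (hm : 0 < m) (hme : Even m) :
    0 ≤ ∑ s : Fin m → ι, (∏ j, x (s j)) / ∑ j, c (s j) := by
  obtain ⟨k, rfl⟩ := Nat.exists_eq_add_one_of_ne_zero hm.ne'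
  rw [sum_prod_div_sum_eq_integral hc]
  exact integral_nonneg zero_le_one fun t ht =>
    mul_nonneg (hme.pow_nonneg _) (inv_nonneg.2 ht.1)

end CauchyForm

lemma eigenvalue_eq_sum_prod_div_sum {ι : Type*} [Fintype ι] (c x : ι → ℝ) (k : ℕ) (lam : ℝ)
    (hnorm : ∑ i, x i ^ 2 = 1)
    (heig : ∀ i, ∑ t : Fin k → ι, (∏ j, x (t j)) / (c i + ∑ j, c (t j)) = lam * x i) :
    lam = ∑ s : Fin (k + 1) → ι, (∏ j, x (s j)) / ∑ j, c (s j) := by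
  rw [← Fintype.sum_sum_cons]
  calc lam = lam * ∑ i, x i ^ 2 := by rw [hnorm, mul_one]
  _ = ∑ i, x i * (lam * x i) := by
        rw [mul_sum]
        exact sum_congr rfl fun i _ => by ring
  _ = _ := by
        refine sum_congr rfl fun i _ => ?_
        rw [← heig i, mul_sum]
        refine sum_congr rfl fun t _ => ?_
        rw [Fin.prod_univ_succ, Fin.sum_univ_succ]
        simp only [Fin.cons_zero, Fin.cons_succ]
        ring

/-- Every Z-eigenvalue of an even order symmetric Cauchy tensor with
positive generating vector is nonnegative. -/
theorem cauchy_tensor_Z_eigenvalue_nonneg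
    (m n : ℕ) (hm : 0 < m) (hme : Even m) (c : Fin n → ℝ)
    (hc : ∀ i, 0 < c i)
    (lam : ℝ) (x : Fin n → ℝ)
    (hnorm : (∑ i, (x i) ^ 2) = 1)
    (heig : ∀ i : Fin n,
        (∑ t : Fin (m - 1) → Fin n, (∏ j, x (t j)) / (c i + ∑ j, c (t j)))
          = lam * x i) :
    0 ≤ lam := by
  obtain ⟨k, rfl⟩ := Nat.exists_eq_add_one_of_ne_zero hm.ne'
  rw [eigenvalue_eq_sum_prod_div_sum c x k lam hnorm heig]
  exact sum_prod_div_sum_nonneg_of_even hc x hm hme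
end

section
/- Let m be an even positive integer and let 𝒞 be the order m dimension n symmetric Cauchy tensor with generating vector c ∈ ℝ^n. If c_1,…,c_n are positive and mutually distinct (c_i ≠ c_j for i ≠ j), then 𝒞 is positive definite. -/
open Filter Set Topology MeasureTheory

/-!
Since `1 / s = ∫₀¹ t ^ (s - 1) dt` for `s > 0`, the multinomial expansion gives
`𝒞 x^m = ∫₀¹ (∑ₖ xₖ t ^ cₖ) ^ m / t dt`, whose integrand is nonnegative for even `m`.
For `x ≠ 0` the generalized polynomial `∑ₖ xₖ t ^ cₖ` with distinct exponents is dominated near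
`0⁺` by its nonzero term of least exponent, so it does not vanish there and the integral is
positive.
-/

section RpowIntegral

variable {ι : Type*} [Fintype ι] (a s : ι → ℝ)

lemma intervalIntegrable_sum_mul_rpow_sub_one (hs : ∀ i, 0 < s i) :
    IntervalIntegrable (fun t : ℝ => ∑ i, a i * t ^ (s i - 1)) volume 0 1 :=
  Finset.sum_fn Finset.univ (fun i t => a i * t ^ (s i - 1)) ▸
    IntervalIntegrable.sum Finset.univ fun i _ =>
      (intervalIntegral.intervalIntegrable_rpow' (by linarith [hs i])).const_mul _

lemma sum_div_eq_integral_sum_mul_rpow_sub_one (hs : ∀ i, 0 < s i) :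
    ∑ i, a i / s i = ∫ t in (0 : ℝ)..1, ∑ i, a i * t ^ (s i - 1) := by
  rw [intervalIntegral.integral_finsetSum fun i _ =>
    (intervalIntegral.intervalIntegrable_rpow' (by linarith [hs i])).const_mul _]
  refine Finset.sum_congr rfl fun i _ => ?_
  rw [intervalIntegral.integral_const_mul, integral_rpow (Or.inl (by linarith [hs i])),
    sub_add_cancel, Real.one_rpow, Real.zero_rpow (hs i).ne', sub_zero, div_eq_mul_one_div]

end RpowIntegral

lemma sum_prod_mul_rpow_sum_sub_one {ι : Type*} [Fintype ι] (m : ℕ) (x c : ι → ℝ) {t : ℝ}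
    (ht : 0 < t) :
    ∑ i : Fin m → ι, (∏ j, x (i j)) * t ^ (∑ j, c (i j) - 1) = (∑ k, x k * t ^ c k) ^ m / t := by
  rw [Fintype.sum_pow, Finset.sum_div]
  refine Finset.sum_congr rfl fun i _ => ?_
  rw [Finset.prod_mul_distrib, ← Real.rpow_sum_of_pos ht, Real.rpow_sub ht, Real.rpow_one,
    mul_div_assoc]

lemma tendsto_sum_mul_rpow_sub_nhdsGT_zero {ι : Type*} [Fintype ι] {x c : ι → ℝ} {k₀ : ι}
    (hk₀ : ∀ k ≠ k₀, x k ≠ 0 → c k₀ < c k) :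
    Tendsto (fun t : ℝ => ∑ k, x k * t ^ (c k - c k₀)) (𝓝[>] 0) (𝓝 (x k₀)) := by
  classical
  rw [← Fintype.sum_ite_eq' k₀ x]
  refine tendsto_finsetSum _ fun k _ => ?_
  by_cases hk : k = k₀
  · subst hk
    simp
  by_cases hxk : x k = 0
  · simp [hk, hxk]
  have hexp : 0 < c k - c k₀ := sub_pos.mpr (hk₀ k hk hxk)
  have h := ((Real.continuous_rpow_const hexp.le).tendsto 0).const_mul (x k)
  rw [Real.zero_rpow hexp.ne', mul_zero] at h
  simpa [hk] using h.mono_left nhdsWithin_le_nhds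

lemma eventually_sum_mul_rpow_ne_zero {ι : Type*} [Fintype ι] {x c : ι → ℝ}
    (hc : Function.Injective c) (hx : x ≠ 0) :
    ∀ᶠ t in 𝓝[>] (0 : ℝ), ∑ k, x k * t ^ c k ≠ 0 := by
  obtain ⟨k₁, hk₁⟩ := Function.ne_iff.mp hx
  obtain ⟨k₀, hk₀, hmin⟩ :=
    (Finset.univ.filter fun k => x k ≠ 0).exists_min_image c ⟨k₁, by simpa using hk₁⟩
  have hxk₀ : x k₀ ≠ 0 := (Finset.mem_filter.mp hk₀).2
  have hlt : ∀ k ≠ k₀, x k ≠ 0 → c k₀ < c k := fun k hk hxk =>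
    (hmin k (by simpa using hxk)).lt_of_ne (hc.ne hk).symm
  filter_upwards [(tendsto_sum_mul_rpow_sub_nhdsGT_zero hlt).eventually_ne hxk₀,
    self_mem_nhdsWithin] with t ht htpos
  have hfactor : ∑ k, x k * t ^ c k = t ^ c k₀ * ∑ k, x k * t ^ (c k - c k₀) := by
    rw [Finset.mul_sum]
    refine Finset.sum_congr rfl fun k _ => ?_
    have := (Real.rpow_pos_of_pos htpos (c k₀)).ne'
    rw [Real.rpow_sub htpos]
    field_simp
  rw [hfactor]
  exact mul_ne_zero (Real.rpow_pos_of_pos htpos _).ne' ht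

lemma intervalIntegral_pos_of_continuousOn_Ioc {f : ℝ → ℝ} {a b c : ℝ}
    (hfi : IntervalIntegrable f volume a b) (hcont : ContinuousOn f (Ioc a b))
    (hnonneg : ∀ t ∈ Ioc a b, 0 ≤ f t) (hc : c ∈ Ioo a b) (hfc : 0 < f c) :
    0 < ∫ t in a..b, f t := by
  have hsub : Icc c b ⊆ Ioc a b := Icc_subset_Ioc_iff hc.2.le |>.mpr ⟨hc.1, le_rfl⟩
  calc 0 < ∫ t in c..b, f t :=
        intervalIntegral.integral_pos hc.2 (hcont.mono hsub)
          (fun t ht => hnonneg t (hsub (Ioc_subset_Icc_self ht)))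
          ⟨c, left_mem_Icc.mpr hc.2.le, hfc⟩
    _ ≤ ∫ t in a..b, f t :=
        intervalIntegral.integral_mono_interval hc.1.le hc.2.le le_rfl
          ((ae_restrict_iff' measurableSet_Ioc).mpr (ae_of_all _ hnonneg)) hfi

/-- If the generating vector of an even order symmetric Cauchy tensor has
positive and mutually distinct entries, then the tensor is positive definite. -/
theorem cauchy_tensor_pd_of_pos_distinct
    (m n : ℕ) (hm : 0 < m) (hme : Even m) (c : Fin n → ℝ)
    (hpos : ∀ i, 0 < c i)
    (hdist : ∀ i j, i ≠ j → c i ≠ c j) :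
    ∀ x : Fin n → ℝ, x ≠ 0 →
      0 < ∑ i : Fin m → Fin n, (∏ j, x (i j)) / (∑ j, c (i j)) := by
  intro x hx
  have hs : ∀ i : Fin m → Fin n, 0 < ∑ j, c (i j) := fun i =>
    Finset.sum_pos (fun j _ => hpos (i j)) ⟨⟨0, hm⟩, Finset.mem_univ _⟩
  have hc : Function.Injective c := fun i j hij => not_imp_not.mp (hdist i j) hij
  have hF : ∀ t ∈ Ioc (0 : ℝ) 1, ∑ i : Fin m → Fin n, (∏ j, x (i j)) * t ^ (∑ j, c (i j) - 1)
      = (∑ k, x k * t ^ c k) ^ m / t := fun t ht => sum_prod_mul_rpow_sum_sub_one m x c ht.1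
  obtain ⟨t₀, hne, ht₀⟩ :=
    ((eventually_sum_mul_rpow_ne_zero hc hx).and (Ioo_mem_nhdsGT one_pos)).exists
  rw [sum_div_eq_integral_sum_mul_rpow_sub_one _ _ hs]
  refine intervalIntegral_pos_of_continuousOn_Ioc
    (intervalIntegrable_sum_mul_rpow_sub_one _ _ hs) ?_ ?_ ht₀ ?_
  · refine continuousOn_finsetSum _ fun i _ => continuousOn_const.mul ?_
    exact continuousOn_id.rpow_const fun t ht => Or.inl ht.1.ne'
  · intro t ht
    rw [hF t ht]
    exact div_nonneg (hme.pow_nonneg _) ht.1.le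
  · rw [hF t₀ (Ioo_subset_Ioc_self ht₀)]
    exact div_pos (hme.pow_pos hne) ht₀.1
end

section
/- Let m be an even positive integer. The order m dimension n Hilbert tensor ℋ, with entries h_{i_1⋯i_m} = 1/(i_1 + i_2 + ⋯ + i_m − m + 1) for i_1,…,i_m ∈ {1,…,n}, is positive definite; that is, Σ_{i_1,…,i_m=1}^n x_{i_1}⋯x_{i_m}/(i_1+⋯+i_m−m+1) > 0 for every nonzero x ∈ ℝ^n. -/
/-!
Since `1 / (k + 1) = ∫₀¹ tᵏ dt`, the form `ℋ xᵐ` equals `∫₀¹ p(t)ᵐ dt` for the polynomial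
`p(t) = ∑ₖ xₖ tᵏ`. For even `m` the integrand is nonnegative, and it vanishes only at the finitely
many roots of `p ≠ 0`, so the integral is positive.
-/

open MeasureTheory Set Polynomial

theorem Polynomial.eval_ofFn {R : Type*} [CommSemiring R] [DecidableEq R] {n : ℕ}
    (v : Fin n → R) (t : R) :
    (ofFn n v).eval t = ∑ k, v k * t ^ (k : ℕ) := by
  simp [ofFn_eq_sum_monomial, eval_finsetSum]

theorem Polynomial.integral_eval_pow_pos_of_even {p : ℝ[X]} (hp : p ≠ 0) {m : ℕ} (hm : Even m)
    {a b : ℝ} (hab : a < b) : 0 < ∫ t in a..b, p.eval t ^ m := by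
  rw [intervalIntegral.integral_pos_iff_support_of_nonneg_ae
    (.of_forall fun t => hm.pow_nonneg _) ((p.continuous.pow m).intervalIntegrable a b)]
  refine ⟨hab, ?_⟩
  have hroots : volume {t | p.IsRoot t} = 0 := (finite_setOfPred_isRoot hp).measure_zero _
  calc 0 < volume (Ioc a b) := by simp [hab]
    _ = volume (Ioc a b \ {t | p.IsRoot t}) := (measure_sdiff_null hroots).symm
    _ ≤ volume (Function.support (fun t => p.eval t ^ m) ∩ Ioc a b) :=
      measure_mono <| by rintro t ⟨ht, hr⟩; exact ⟨pow_ne_zero _ hr, ht⟩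

theorem sum_mul_pow_pow_eq {ι : Type*} [Fintype ι] (x : ι → ℝ) (d : ι → ℕ) (m : ℕ) (t : ℝ) :
    (∑ k, x k * t ^ d k) ^ m = ∑ i : Fin m → ι, (∏ j, x (i j)) * t ^ (∑ j, d (i j)) := by
  simp only [Fintype.sum_pow, Finset.prod_mul_distrib, Finset.prod_pow_eq_pow_sum]

theorem integral_sum_mul_pow_pow {ι : Type*} [Fintype ι] (x : ι → ℝ) (d : ι → ℕ) (m : ℕ) :
    ∫ t in (0 : ℝ)..1, (∑ k, x k * t ^ d k) ^ m =
      ∑ i : Fin m → ι, (∏ j, x (i j)) / ((∑ j, (d (i j) : ℝ)) + 1) := by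
  simp_rw [sum_mul_pow_pow_eq]
  rw [intervalIntegral.integral_finsetSum fun i _ =>
    (by fun_prop : Continuous _).intervalIntegrable _ _]
  refine Finset.sum_congr rfl fun i _ => ?_
  rw [intervalIntegral.integral_const_mul, integral_pow]
  push_cast
  simp [div_eq_mul_inv]

theorem hilbert_tensor_positive_definite_general
    (m n : ℕ) (hme : Even m) :
    ∀ x : Fin n → ℝ, x ≠ 0 →
      0 < ∑ i : Fin m → Fin n,
            (∏ j, x (i j)) / ((∑ j, ((i j : ℕ) : ℝ)) + 1) := by
  intro x hx
  have hp : ofFn n x ≠ 0 := (map_ne_zero_iff _ (injective_ofFn n)).2 hx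
  have hpos := integral_eval_pow_pos_of_even hp hme zero_lt_one
  simpa only [eval_ofFn, integral_sum_mul_pow_pow] using hpos

/-- The even order Hilbert tensor, with entries
`1/(i₁ + ⋯ + i_m − m + 1)` for 1-based indices `i₁,…,i_m ∈ {1,…,n}`
(equivalently `1/(i₁ + ⋯ + i_m + 1)` for 0-based indices), is positive definite. -/
theorem hilbert_tensor_positive_definite
    (m n : ℕ) (hm : 0 < m) (hme : Even m) :
    ∀ x : Fin n → ℝ, x ≠ 0 →
      0 < ∑ i : Fin m → Fin n,
            (∏ j, x (i j)) / ((∑ j, ((i j : ℕ) : ℝ)) + 1) :=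
  hilbert_tensor_positive_definite_general m n hme
end

section
/- Let m be an even positive integer and let 𝒞_1, 𝒞_2, …, 𝒞_L be order m dimension n symmetric Cauchy tensors, each positive semi-definite, with generating vectors c^{(1)},…,c^{(L)} respectively. Then the Hadamard product 𝒞_1 ∘ 𝒞_2 ∘ ⋯ ∘ 𝒞_L is a positive semi-definite tensor: for every x ∈ ℝ^n, Σ_{i_1,…,i_m=1}^n x_{i_1}⋯x_{i_m} · Π_{k=1}^L 1/(c^{(k)}_{i_1}+⋯+c^{(k)}_{i_m}) ≥ 0. -/
/-!
Each factor `1 / s` with `s > 0` is `∫₀¹ t ^ (s - 1) dt`. Peeling off one Cauchy factor this way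
turns the form into `∫₀¹ t⁻¹ · Q(x ⊙ t ^ c) dt`, where `Q` is the form of the remaining factors
and `(x ⊙ t ^ c)_a = x_a t ^ c_a`; by induction the integrand is nonnegative, and with no factors left
the form is `(∑ x_a) ^ m ≥ 0` because `m` is even. Positive semi-definiteness of a single Cauchy
tensor forces its generating vector to be positive (evaluate at a unit vector), which makes every
denominator positive.
-/

open Finset

lemma one_div_eq_integral_rpow_sub_one {s : ℝ} (hs : 0 < s) :
    1 / s = ∫ t in (0 : ℝ)..1, t ^ (s - 1) := by
  rw [integral_rpow (Or.inl (by linarith)), sub_add_cancel, Real.one_rpow,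
    Real.zero_rpow hs.ne', sub_zero]

lemma rpow_sum_sub_one_eq {κ : Type*} (s : Finset κ) (a : κ → ℝ) {t : ℝ} (ht : 0 < t) :
    t ^ (∑ j ∈ s, a j - 1) = (∏ j ∈ s, t ^ a j) * t⁻¹ := by
  rw [Real.rpow_sub ht, Real.rpow_one, Real.rpow_sum_of_pos ht, div_eq_mul_inv]

theorem hadamard_cauchy_form_nonneg {ι κ : Type*} [Fintype ι] {m : ℕ} (hm : Even m)
    (c : κ → ι → ℝ) (s : Finset κ) (hc : ∀ k ∈ s, ∀ i : Fin m → ι, 0 < ∑ j, c k (i j))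
    (x : ι → ℝ) :
    0 ≤ ∑ i : Fin m → ι, (∏ j, x (i j)) * ∏ k ∈ s, 1 / ∑ j, c k (i j) := by
  classical
  induction s using Finset.induction_on generalizing x with
  | empty =>
    simpa only [prod_empty, mul_one, ← Fintype.sum_pow] using hm.pow_nonneg _
  | insert k s hks ih =>
    have hck := hc k (mem_insert_self k s)
    have ih' := ih fun k' hk' => hc k' (mem_insert_of_mem hk')
    set F : (Fin m → ι) → ℝ := fun i => (∏ j, x (i j)) * ∏ k ∈ s, 1 / ∑ j, c k (i j)
    have hF : ∀ i : Fin m → ι, (∏ j, x (i j)) * ∏ k' ∈ insert k s, 1 / ∑ j, c k' (i j) =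
        ∫ t in (0 : ℝ)..1, F i * t ^ (∑ j, c k (i j) - 1) := by
      intro i
      rw [intervalIntegral.integral_const_mul, ← one_div_eq_integral_rpow_sub_one (hck i),
        prod_insert hks]
      ring
    rw [sum_congr rfl fun i _ => hF i, ← intervalIntegral.integral_finsetSum fun i _ =>
        (intervalIntegral.intervalIntegrable_rpow' (by linarith [hck i])).const_mul _,
      intervalIntegral.integral_of_le zero_le_one]
    refine MeasureTheory.setIntegral_nonneg measurableSet_Ioc fun t ⟨ht, _⟩ => ?_
    have hrescale : ∀ i : Fin m → ι, F i * t ^ (∑ j, c k (i j) - 1) =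
        ((∏ j, x (i j) * t ^ c k (i j)) * ∏ k ∈ s, 1 / ∑ j, c k (i j)) * t⁻¹ := by
      intro i
      rw [rpow_sum_sub_one_eq _ _ ht, prod_mul_distrib]
      ring
    rw [sum_congr rfl fun i _ => hrescale i, ← sum_mul]
    exact mul_nonneg (ih' fun a => x a * t ^ c k a) (inv_nonneg.mpr ht.le)

lemma cauchy_form_single {ι : Type*} [Fintype ι] [DecidableEq ι] {m : ℕ} (c : ι → ℝ) (a : ι) :
    ∑ i : Fin m → ι, (∏ j, (Pi.single a 1 : ι → ℝ) (i j)) / ∑ j, c (i j) = 1 / (m * c a) := by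
  rw [sum_eq_single (fun _ => a)]
  · simp
  · intro i _ hi
    obtain ⟨j, hj⟩ : ∃ j, i j ≠ a := by
      by_contra! h
      exact hi (funext h)
    rw [prod_eq_zero (mem_univ j) (Pi.single_eq_of_ne hj 1), zero_div]
  · exact fun h => absurd (mem_univ _) h

lemma pos_of_cauchy_psd {ι : Type*} [Fintype ι] {m : ℕ} (c : ι → ℝ) (a : ι)
    (hc : ∑ _j : Fin m, c a ≠ 0)
    (hpsd : ∀ x : ι → ℝ, 0 ≤ ∑ i : Fin m → ι, (∏ j, x (i j)) / ∑ j, c (i j)) :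
    0 < c a := by
  classical
  have h := hpsd (Pi.single a 1)
  rw [cauchy_form_single] at h
  simp only [sum_const, card_univ, Fintype.card_fin, nsmul_eq_mul] at hc
  exact pos_of_mul_pos_right (lt_of_le_of_ne (one_div_nonneg.mp h) hc.symm) (Nat.cast_nonneg m)

theorem hadamard_product_finitely_many_cauchy_psd_general
    (m n L : ℕ) (hme : Even m) (c : Fin L → Fin n → ℝ)
    (hc : ∀ k : Fin L, ∀ i : Fin m → Fin n, (∑ j, c k (i j)) ≠ 0)
    (hpsd : ∀ k : Fin L, ∀ x : Fin n → ℝ,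
        0 ≤ ∑ i : Fin m → Fin n, (∏ j, x (i j)) / (∑ j, c k (i j))) :
    ∀ x : Fin n → ℝ,
      0 ≤ ∑ i : Fin m → Fin n,
            (∏ j, x (i j)) * ∏ k : Fin L, 1 / (∑ j, c k (i j)) := by
  have hden : ∀ (k : Fin L) (i : Fin m → Fin n), 0 < ∑ j, c k (i j) := fun k i =>
    (sum_nonneg fun j _ => (pos_of_cauchy_psd (c k) (i j) (hc k _) (hpsd k)).le).lt_of_ne'
      (hc k i)
  exact hadamard_cauchy_form_nonneg hme c univ fun k _ => hden k

/-- The Hadamard product of finitely many positive semi-definite even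
order symmetric Cauchy tensors is positive semi-definite. -/
theorem hadamard_product_finitely_many_cauchy_psd
    (m n L : ℕ) (hm : 0 < m) (hme : Even m) (c : Fin L → Fin n → ℝ)
    (hc : ∀ k : Fin L, ∀ i : Fin m → Fin n, (∑ j, c k (i j)) ≠ 0)
    (hpsd : ∀ k : Fin L, ∀ x : Fin n → ℝ,
        0 ≤ ∑ i : Fin m → Fin n, (∏ j, x (i j)) / (∑ j, c k (i j))) :
    ∀ x : Fin n → ℝ,
      0 ≤ ∑ i : Fin m → Fin n,
            (∏ j, x (i j)) * ∏ k : Fin L, 1 / (∑ j, c k (i j)) :=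
  hadamard_product_finitely_many_cauchy_psd_general m n L hme c hc hpsd
end

section
/- Let m be an even positive integer and let 𝒞 and 𝒞′ be order m dimension n symmetric Cauchy tensors with generating vectors c and c′ respectively. If 𝒞 and 𝒞′ are positive definite, then their Hadamard product 𝒞 ∘ 𝒞′ is a positive definite tensor: for every nonzero x ∈ ℝ^n, Σ_{i_1,…,i_m=1}^n x_{i_1}⋯x_{i_m} / [(c_{i_1}+⋯+c_{i_m})(c′_{i_1}+⋯+c′_{i_m})] > 0. -/
/-!
Since `1 / (a b) = a⁻¹ ∫₀¹ s ^ (b - 1) ds` for `b > 0`, the Hadamard product of any tensor `𝒜`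
with the Cauchy tensor of a positive vector `c'` satisfies
`(𝒜 ∘ 𝒞') x^m = ∫₀¹ 𝒜 y(s)^m / s ds` with `y(s)_k = x_k s^{c'_k}`, whose integrand is positive
when `𝒜` is positive definite and `x ≠ 0`. Positivity of `c'` comes from that of `𝒞'`:
evaluated at a unit vector `e_k`, its form is `1 / (m c'_k)`.
-/

open Finset Real

theorem intervalIntegrable_rpow_sub_one {r : ℝ} (hr : 0 < r) :
    IntervalIntegrable (fun s : ℝ => s ^ (r - 1)) MeasureTheory.volume 0 1 :=
  intervalIntegral.intervalIntegrable_rpow' (by linarith)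

theorem integral_rpow_sub_one_s14 {r : ℝ} (hr : 0 < r) : ∫ s in (0 : ℝ)..1, s ^ (r - 1) = r⁻¹ := by
  rw [integral_rpow (Or.inl (by linarith)), sub_add_cancel, one_rpow, zero_rpow hr.ne', sub_zero,
    one_div]

variable {ι : Type*} [Fintype ι] {m : ℕ}

noncomputable def tensorForm (A : (Fin m → ι) → ℝ) (x : ι → ℝ) : ℝ :=
  ∑ i, A i * ∏ j, x (i j)

def TensorPosDef (A : (Fin m → ι) → ℝ) : Prop :=
  ∀ x : ι → ℝ, x ≠ 0 → 0 < tensorForm A x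

noncomputable def cauchyTensor (m : ℕ) (c : ι → ℝ) : (Fin m → ι) → ℝ :=
  fun i => (∑ j, c (i j))⁻¹

theorem tensorForm_cauchyTensor_single [DecidableEq ι] (c : ι → ℝ) (k : ι) :
    tensorForm (cauchyTensor m c) (Pi.single k 1) = ((m : ℝ) * c k)⁻¹ := by
  rw [tensorForm, sum_eq_single (fun _ => k)]
  · simp [cauchyTensor]
  · intro i _ hi
    obtain ⟨j, hj⟩ := Function.ne_iff.mp hi
    rw [prod_eq_zero (mem_univ j) (Pi.single_eq_of_ne hj 1), mul_zero]
  · exact fun h => absurd (mem_univ _) h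

theorem TensorPosDef.cauchyTensor_pos {c : ι → ℝ} (hc : TensorPosDef (cauchyTensor m c))
    (k : ι) : 0 < m ∧ 0 < c k := by
  classical
  have h := hc _ (Pi.single_ne_zero_iff.mpr one_ne_zero : Pi.single k (1 : ℝ) ≠ 0)
  rw [tensorForm_cauchyTensor_single, inv_pos] at h
  rcases pos_and_pos_or_neg_and_neg_of_mul_pos h with h | h
  · exact ⟨by exact_mod_cast h.1, h.2⟩
  · exact absurd h.1 (Nat.cast_nonneg m).not_gt

section Hadamard

-- Tensors are functions of index tuples, so the pointwise product `A * B` is the Hadamard product.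
variable (A : (Fin m → ι) → ℝ) (b : ι → ℝ) (x : ι → ℝ)

theorem tensorForm_mul_cauchyTensor_eq_integral (hb : ∀ i : Fin m → ι, 0 < ∑ j, b (i j)) :
    tensorForm (A * cauchyTensor m b) x =
      ∫ s in (0 : ℝ)..1, ∑ i, A i * (∏ j, x (i j)) * s ^ (∑ j, b (i j) - 1) := by
  rw [intervalIntegral.integral_finsetSum fun i _ =>
    (intervalIntegrable_rpow_sub_one (hb i)).const_mul _]
  refine sum_congr rfl fun i _ => ?_
  rw [intervalIntegral.integral_const_mul, integral_rpow_sub_one_s14 (hb i)]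
  simp only [Pi.mul_apply, cauchyTensor]
  ring

theorem tensorForm_mul_rpow {s : ℝ} (hs : 0 < s) :
    tensorForm A (fun k => x k * s ^ b k) =
      ∑ i, A i * (∏ j, x (i j)) * s ^ (∑ j, b (i j)) := by
  simp only [tensorForm, prod_mul_distrib, ← rpow_sum_of_pos hs, mul_assoc]

variable {A b}

theorem TensorPosDef.mul_cauchyTensor (hA : TensorPosDef A) (hm : 0 < m) (hb : ∀ k, 0 < b k) :
    TensorPosDef (A * cauchyTensor m b) := by
  intro x hx
  have : Nonempty (Fin m) := Fin.pos_iff_nonempty.mp hm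
  have hsum : ∀ i : Fin m → ι, 0 < ∑ j, b (i j) := fun i =>
    sum_pos (fun j _ => hb (i j)) univ_nonempty
  rw [tensorForm_mul_cauchyTensor_eq_integral A b x hsum]
  refine intervalIntegral.intervalIntegral_pos_of_pos_on ?_ (fun s hs => ?_) one_pos
  · simpa only [sum_fn] using IntervalIntegrable.sum univ fun i _ =>
      (intervalIntegrable_rpow_sub_one (hsum i)).const_mul (A i * ∏ j, x (i j))
  · have hy : (fun k => x k * s ^ b k) ≠ 0 := by
      obtain ⟨k, hk⟩ := Function.ne_iff.mp hx
      exact Function.ne_iff.mpr ⟨k, mul_ne_zero hk (rpow_pos_of_pos hs.1 _).ne'⟩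
    have hintegrand : ∑ i, A i * (∏ j, x (i j)) * s ^ (∑ j, b (i j) - 1) =
        tensorForm A (fun k => x k * s ^ b k) / s := by
      simp only [tensorForm_mul_rpow A b x hs.1, sum_div, rpow_sub hs.1, rpow_one, mul_div_assoc]
    rw [hintegrand]
    exact div_pos (hA _ hy) hs.1

end Hadamard

theorem hadamard_product_cauchy_pd_general
    (m n : ℕ) (c c' : Fin n → ℝ)
    (hpd : ∀ x : Fin n → ℝ, x ≠ 0 →
        0 < ∑ i : Fin m → Fin n, (∏ j, x (i j)) / (∑ j, c (i j)))
    (hpd' : ∀ x : Fin n → ℝ, x ≠ 0 →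
        0 < ∑ i : Fin m → Fin n, (∏ j, x (i j)) / (∑ j, c' (i j))) :
    ∀ x : Fin n → ℝ, x ≠ 0 →
      0 < ∑ i : Fin m → Fin n,
            (∏ j, x (i j)) / ((∑ j, c (i j)) * (∑ j, c' (i j))) := by
  have hCauchy : ∀ d : Fin n → ℝ,
      (∀ x : Fin n → ℝ, x ≠ 0 → 0 < ∑ i : Fin m → Fin n, (∏ j, x (i j)) / (∑ j, d (i j))) →
        TensorPosDef (cauchyTensor m d) := fun d hd x hx => by
    simpa only [tensorForm, cauchyTensor, div_eq_inv_mul] using hd x hx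
  intro x hx
  obtain ⟨k, -⟩ := Function.ne_iff.mp hx
  have hc' := (hCauchy c' hpd').cauchyTensor_pos
  have h := (hCauchy c hpd).mul_cauchyTensor (hc' k).1 (fun k => (hc' k).2) x hx
  simpa only [tensorForm, cauchyTensor, Pi.mul_apply, div_eq_inv_mul, mul_inv] using h

/-- The Hadamard product of two positive definite even order symmetric
Cauchy tensors is positive definite. -/
theorem hadamard_product_cauchy_pd
    (m n : ℕ) (hm : 0 < m) (hme : Even m) (c c' : Fin n → ℝ)
    (hc : ∀ i : Fin m → Fin n, (∑ j, c (i j)) ≠ 0)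
    (hc' : ∀ i : Fin m → Fin n, (∑ j, c' (i j)) ≠ 0)
    (hpd : ∀ x : Fin n → ℝ, x ≠ 0 →
        0 < ∑ i : Fin m → Fin n, (∏ j, x (i j)) / (∑ j, c (i j)))
    (hpd' : ∀ x : Fin n → ℝ, x ≠ 0 →
        0 < ∑ i : Fin m → Fin n, (∏ j, x (i j)) / (∑ j, c' (i j))) :
    ∀ x : Fin n → ℝ, x ≠ 0 →
      0 < ∑ i : Fin m → Fin n,
            (∏ j, x (i j)) / ((∑ j, c (i j)) * (∑ j, c' (i j))) :=
  hadamard_product_cauchy_pd_general m n c c' hpd hpd'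
end

section
/- Let m be an even positive integer and let 𝒞 be the order m dimension n symmetric Cauchy tensor with generating vector c ∈ ℝ^n whose entries have different signs (there exist i, j with c_i > 0 and c_j < 0). Define λ_max = sup{𝒞x^m : x ∈ ℝ^n, Σ_{i=1}^n x_i^m = 1} and λ_min = inf{𝒞x^m : x ∈ ℝ^n, Σ_{i=1}^n x_i^m = 1}. Then λ_min ≤ 1/(m·max{c_i : c_i < 0}) < 0 < 1/(m·min{c_i : c_i > 0}) ≤ λ_max. -/
/-!
Evaluating `𝒞xᵐ` at a standard basis vector `eᵢ` (which satisfies `∑ xⱼᵐ = 1`) leaves only the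
term with all indices equal to `i`, namely `1 / (m cᵢ)`. Hence every `1 / (m cᵢ)` lies between
`λ_min` and `λ_max`; taking `cᵢ` to be the largest negative and the smallest positive entry
gives the bounds. For even `m` the constraint forces `|xⱼ| ≤ 1`, so `𝒞xᵐ` is bounded on it and
`λ_min`, `λ_max` are genuine infimum and supremum.
-/

open Finset

namespace CauchyTensor

/-- `𝒞xᵐ` -/
noncomputable def form (m : ℕ) {n : ℕ} (c x : Fin n → ℝ) : ℝ :=
  ∑ i : Fin m → Fin n, (∏ j, x (i j)) / ∑ j, c (i j)

def sphereValues (m : ℕ) {n : ℕ} (c : Fin n → ℝ) : Set ℝ :=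
  {y | ∃ x : Fin n → ℝ, ∑ i, x i ^ m = 1 ∧ y = form m c x}

variable {m n : ℕ}

theorem abs_le_one_of_sum_pow_eq_one {ι : Type*} [Fintype ι] {x : ι → ℝ} (hm : m ≠ 0)
    (hme : Even m) (hx : ∑ i, x i ^ m = 1) (k : ι) : |x k| ≤ 1 := by
  have hk : |x k| ^ m ≤ 1 := by
    rw [hme.pow_abs, ← hx]
    exact single_le_sum (fun i _ => hme.pow_nonneg (x i)) (mem_univ k)
  exact (pow_le_one_iff_of_nonneg (abs_nonneg _) hm).mp hk

theorem abs_form_le (c : Fin n → ℝ) {x : Fin n → ℝ} (hx : ∀ k, |x k| ≤ 1) :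
    |form m c x| ≤ ∑ i : Fin m → Fin n, |∑ j, c (i j)|⁻¹ := by
  calc |form m c x| ≤ ∑ i : Fin m → Fin n, |(∏ j, x (i j)) / ∑ j, c (i j)| :=
        abs_sum_le_sum_abs _ _
    _ ≤ ∑ i : Fin m → Fin n, |∑ j, c (i j)|⁻¹ := by
        gcongr with i
        rw [abs_div, abs_prod, div_eq_mul_inv]
        exact mul_le_of_le_one_left (by positivity)
          (prod_le_one (fun j _ => abs_nonneg _) (fun j _ => hx _))

theorem isBounded_sphereValues (hm : m ≠ 0) (hme : Even m) (c : Fin n → ℝ) :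
    Bornology.IsBounded (sphereValues m c) := by
  refine isBounded_iff_forall_norm_le.mpr ⟨∑ i : Fin m → Fin n, |∑ j, c (i j)|⁻¹, ?_⟩
  rintro _ ⟨x, hx, rfl⟩
  exact abs_form_le c (abs_le_one_of_sum_pow_eq_one hm hme hx)

theorem form_single (c : Fin n → ℝ) (i₀ : Fin n) :
    form m c (Pi.single i₀ 1) = 1 / (m * c i₀) := by
  rw [form, sum_eq_single (fun _ => i₀)]
  · simp
  · intro i _ hi
    obtain ⟨j, hj⟩ : ∃ j, i j ≠ i₀ := Function.ne_iff.mp hi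
    rw [prod_eq_zero (mem_univ j) (Pi.single_eq_of_ne hj 1), zero_div]
  · exact fun h => absurd (mem_univ _) h

theorem one_div_mul_mem_sphereValues (hm : m ≠ 0) (c : Fin n → ℝ) (i : Fin n) :
    1 / (m * c i) ∈ sphereValues m c :=
  ⟨Pi.single i 1, by simp [Pi.single_apply, hm], (form_single c i).symm⟩

end CauchyTensor

theorem exists_apply_eq_csSup_of_finite {ι α : Type*} [Finite ι] [ConditionallyCompleteLinearOrder α]
    (f : ι → α) {p : α → Prop} (h : ∃ i, p (f i)) :
    ∃ i, f i = sSup {a | (∃ i, f i = a) ∧ p a} ∧ p (f i) := by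
  obtain ⟨i, hi⟩ := h
  set s := {a | (∃ i, f i = a) ∧ p a}
  have hne : s.Nonempty := ⟨f i, ⟨i, rfl⟩, hi⟩
  obtain ⟨⟨j, hj⟩, hp⟩ := hne.csSup_mem <| (Set.finite_range f).subset fun _ ha => ha.1
  exact ⟨j, hj, hj ▸ hp⟩

theorem exists_apply_eq_csInf_of_finite {ι α : Type*} [Finite ι] [ConditionallyCompleteLinearOrder α]
    (f : ι → α) {p : α → Prop} (h : ∃ i, p (f i)) :
    ∃ i, f i = sInf {a | (∃ i, f i = a) ∧ p a} ∧ p (f i) :=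
  exists_apply_eq_csSup_of_finite (α := αᵒᵈ) f h

open CauchyTensor in
theorem cauchy_tensor_eigenvalue_sign_bounds_general
    (m n : ℕ) (hm : 0 < m) (hme : Even m) (c : Fin n → ℝ)
    (hpos : ∃ i, 0 < c i) (hneg : ∃ i, c i < 0) :
    sInf {y : ℝ | ∃ x : Fin n → ℝ, (∑ i, (x i) ^ m) = 1 ∧
          y = ∑ i : Fin m → Fin n, (∏ j, x (i j)) / (∑ j, c (i j))}
        ≤ 1 / (m * sSup {a : ℝ | (∃ i, c i = a) ∧ a < 0}) ∧
      1 / (m * sSup {a : ℝ | (∃ i, c i = a) ∧ a < 0}) < 0 ∧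
      0 < 1 / (m * sInf {a : ℝ | (∃ i, c i = a) ∧ 0 < a}) ∧
      1 / (m * sInf {a : ℝ | (∃ i, c i = a) ∧ 0 < a})
        ≤ sSup {y : ℝ | ∃ x : Fin n → ℝ, (∑ i, (x i) ^ m) = 1 ∧
            y = ∑ i : Fin m → Fin n, (∏ j, x (i j)) / (∑ j, c (i j))} := by
  have hbdd := isBounded_sphereValues hm.ne' hme c
  have hmR : (0 : ℝ) < m := by exact_mod_cast hm
  obtain ⟨ineg, hineg, hcneg⟩ := exists_apply_eq_csSup_of_finite c (p := (· < 0)) hneg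
  obtain ⟨ipos, hipos, hcpos⟩ := exists_apply_eq_csInf_of_finite c (p := (0 < ·)) hpos
  rw [← hineg, ← hipos]
  exact ⟨csInf_le hbdd.bddBelow (one_div_mul_mem_sphereValues hm.ne' c ineg),
    one_div_neg.mpr (mul_neg_of_pos_of_neg hmR hcneg),
    one_div_pos.mpr (mul_pos hmR hcpos),
    le_csSup hbdd.bddAbove (one_div_mul_mem_sphereValues hm.ne' c ipos)⟩

/-- If the generating vector of an even order symmetric Cauchy tensor
has entries of both signs, then
`λ_min ≤ 1/(m·max{cᵢ : cᵢ < 0}) < 0 < 1/(m·min{cᵢ : cᵢ > 0}) ≤ λ_max`,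
where `λ_max` and `λ_min` are the max and min of `𝒞xᵐ` over `{x : ∑ xᵢᵐ = 1}`. -/
theorem cauchy_tensor_eigenvalue_sign_bounds
    (m n : ℕ) (hm : 0 < m) (hme : Even m) (c : Fin n → ℝ)
    (hc : ∀ i : Fin m → Fin n, (∑ j, c (i j)) ≠ 0)
    (hpos : ∃ i, 0 < c i) (hneg : ∃ i, c i < 0) :
    sInf {y : ℝ | ∃ x : Fin n → ℝ, (∑ i, (x i) ^ m) = 1 ∧
          y = ∑ i : Fin m → Fin n, (∏ j, x (i j)) / (∑ j, c (i j))}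
        ≤ 1 / (m * sSup {a : ℝ | (∃ i, c i = a) ∧ a < 0}) ∧
      1 / (m * sSup {a : ℝ | (∃ i, c i = a) ∧ a < 0}) < 0 ∧
      0 < 1 / (m * sInf {a : ℝ | (∃ i, c i = a) ∧ 0 < a}) ∧
      1 / (m * sInf {a : ℝ | (∃ i, c i = a) ∧ 0 < a})
        ≤ sSup {y : ℝ | ∃ x : Fin n → ℝ, (∑ i, (x i) ^ m) = 1 ∧
            y = ∑ i : Fin m → Fin n, (∏ j, x (i j)) / (∑ j, c (i j))} :=
  cauchy_tensor_eigenvalue_sign_bounds_general m n hm hme c hpos hneg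
end

section
/- Let m be an even positive integer and let 𝒞 be the order m dimension n symmetric Cauchy tensor with generating vector c ∈ ℝ^n satisfying c_i > 0 for all i and with at least two entries of c distinct. Let r_i = Σ_{i_2,…,i_m=1}^n 1/(c_i+c_{i_2}+⋯+c_{i_m}) be the row sums, R = max_i r_i, r = min_i r_i, and ā = max_i c_i. Suppose λ ∈ ℝ and x ∈ ℝ^n with x_i > 0 for all i satisfy Σ_{i_2,…,i_m=1}^n x_{i_2}⋯x_{i_m}/(c_i+c_{i_2}+⋯+c_{i_m}) = λ x_i^{m-1} for every i. Then r + (1/(m ā))(√(R/r) − 1) < λ < R − (1/(m ā))(1 − √(r/R)). -/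
/-!
Let `X` and `Y` be the largest and smallest of the `x_i^(m-1)`, and `h = 1/(m ā)`, a lower bound
for every entry of the tensor. The eigen-equation at the positions of the extreme entries of `x`
and at rows of extreme row sum gives `λ X ≤ R X - h (X - Y)`, `r Y + h (X - Y) ≤ λ Y`, `R Y ≤ λ X`
and `λ Y ≤ r X`, where `h (X - Y)` is contributed by the constant multi-index at the other extreme
position. If `X / Y > √(R/r)`, the first two estimates give the two bounds; otherwise the last two
give `√(rR) ≤ λ` and `λ ≤ √(rR)`, and `√(rR)` lies strictly between the bounds because `h < r < R`.
-/

open Finset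

section WeightedSum

variable {T : Type*} [Fintype T] {a P : T → ℝ} {h X Y : ℝ}

lemma sum_mul_le_sum_mul_sub (ha : ∀ t, 0 ≤ a t) (hP : ∀ t, P t ≤ X) {t₀ : T}
    (hh : h ≤ a t₀) : ∑ t, a t * P t ≤ (∑ t, a t) * X - h * (X - P t₀) := by
  have key : h * (X - P t₀) ≤ ∑ t, a t * (X - P t) :=
    (mul_le_mul_of_nonneg_right hh (sub_nonneg.2 (hP t₀))).trans <|
      single_le_sum (fun t _ ↦ mul_nonneg (ha t) (sub_nonneg.2 (hP t))) (mem_univ t₀)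
  simp only [mul_sub, sum_sub_distrib, ← sum_mul] at key
  linarith

lemma sum_mul_add_le_sum_mul (ha : ∀ t, 0 ≤ a t) (hP : ∀ t, Y ≤ P t) {t₀ : T}
    (hh : h ≤ a t₀) : (∑ t, a t) * Y + h * (P t₀ - Y) ≤ ∑ t, a t * P t := by
  have := sum_mul_le_sum_mul_sub (P := fun t ↦ -P t) (X := -Y) ha (fun t ↦ neg_le_neg (hP t)) hh
  simp only [mul_neg, sum_neg_distrib] at this
  linarith

end WeightedSum

section TensorEigenvector

variable {n k : ℕ} {A : Fin n → (Fin k → Fin n) → ℝ} {x : Fin n → ℝ} {lam h r R : ℝ}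
  {p q : Fin n}

lemma prod_le_pow_of_forall_le (hx : ∀ i, 0 ≤ x i) (hp : ∀ i, x i ≤ x p)
    (t : Fin k → Fin n) : ∏ j, x (t j) ≤ x p ^ k := by
  simpa using prod_le_prod (s := univ) (fun j _ ↦ hx (t j)) (fun j _ ↦ hp (t j))

lemma pow_le_prod_of_forall_ge (hq₀ : 0 ≤ x q) (hq : ∀ i, x q ≤ x i)
    (t : Fin k → Fin n) : x q ^ k ≤ ∏ j, x (t j) := by
  simpa using prod_le_prod (s := univ) (fun _ _ ↦ hq₀) (fun j _ ↦ hq (t j))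

lemma eigenvalue_nonneg (hA : ∀ i t, 0 ≤ A i t) (hx : ∀ i, 0 < x i)
    (heig : ∀ i, ∑ t, A i t * ∏ j, x (t j) = lam * x i ^ k) (i : Fin n) : 0 ≤ lam := by
  have hsum : 0 ≤ lam * x i ^ k := heig i ▸
    sum_nonneg fun t _ ↦ mul_nonneg (hA i t) (prod_nonneg fun j _ ↦ (hx (t j)).le)
  exact nonneg_of_mul_nonneg_left hsum (pow_pos (hx i) k)

lemma eigenvalue_mul_max_le (hA : ∀ i t, 0 ≤ A i t) (hx : ∀ i, 0 ≤ x i)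
    (heig : ∀ i, ∑ t, A i t * ∏ j, x (t j) = lam * x i ^ k) (hp : ∀ i, x i ≤ x p)
    (hh : h ≤ A p fun _ ↦ q) (hR : ∑ t, A p t ≤ R) :
    lam * x p ^ k ≤ R * x p ^ k - h * (x p ^ k - x q ^ k) := by
  have := sum_mul_le_sum_mul_sub (hA p) (prod_le_pow_of_forall_le hx hp) hh
  simp only [heig p, prod_const, card_univ, Fintype.card_fin] at this
  nlinarith [pow_nonneg (hx p) k]

lemma le_eigenvalue_mul_min (hA : ∀ i t, 0 ≤ A i t) (hx : ∀ i, 0 ≤ x i)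
    (heig : ∀ i, ∑ t, A i t * ∏ j, x (t j) = lam * x i ^ k) (hq : ∀ i, x q ≤ x i)
    (hh : h ≤ A q fun _ ↦ p) (hr : r ≤ ∑ t, A q t) :
    r * x q ^ k + h * (x p ^ k - x q ^ k) ≤ lam * x q ^ k := by
  have := sum_mul_add_le_sum_mul (hA q) (pow_le_prod_of_forall_ge (hx q) hq) hh
  simp only [heig q, prod_const, card_univ, Fintype.card_fin] at this
  nlinarith [pow_nonneg (hx q) k]

lemma sum_mul_min_le_eigenvalue_mul_max (hA : ∀ i t, 0 ≤ A i t) (hx : ∀ i, 0 < x i)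
    (heig : ∀ i, ∑ t, A i t * ∏ j, x (t j) = lam * x i ^ k) (hp : ∀ i, x i ≤ x p)
    (hq : ∀ i, x q ≤ x i) (i : Fin n) : (∑ t, A i t) * x q ^ k ≤ lam * x p ^ k :=
  calc (∑ t, A i t) * x q ^ k
      ≤ ∑ t, A i t * ∏ j, x (t j) := by
        rw [sum_mul]
        exact sum_le_sum fun t _ ↦
          mul_le_mul_of_nonneg_left (pow_le_prod_of_forall_ge (hx q).le hq t) (hA i t)
    _ = lam * x i ^ k := heig i
    _ ≤ lam * x p ^ k := mul_le_mul_of_nonneg_left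
        (pow_le_pow_left₀ (hx i).le (hp i) k) (eigenvalue_nonneg hA hx heig i)

lemma eigenvalue_mul_min_le_sum_mul_max (hA : ∀ i t, 0 ≤ A i t) (hx : ∀ i, 0 < x i)
    (heig : ∀ i, ∑ t, A i t * ∏ j, x (t j) = lam * x i ^ k) (hp : ∀ i, x i ≤ x p)
    (hq : ∀ i, x q ≤ x i) (i : Fin n) : lam * x q ^ k ≤ (∑ t, A i t) * x p ^ k :=
  calc lam * x q ^ k
      ≤ lam * x i ^ k := mul_le_mul_of_nonneg_left
        (pow_le_pow_left₀ (hx q).le (hq i) k) (eigenvalue_nonneg hA hx heig i)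
    _ = ∑ t, A i t * ∏ j, x (t j) := (heig i).symm
    _ ≤ (∑ t, A i t) * x p ^ k := by
        rw [sum_mul]
        exact sum_le_sum fun t _ ↦ mul_le_mul_of_nonneg_left
          (prod_le_pow_of_forall_le (fun i ↦ (hx i).le) hp t) (hA i t)

end TensorEigenvector

section Bounds

variable {r R h lam X Y : ℝ}

lemma add_mul_sqrt_div_sub_one_lt (hh : 0 < h) (hhr : h < r) (hrR : r < R) (hY : 0 < Y)
    (hYX : Y ≤ X) (hmin : r * Y + h * (X - Y) ≤ lam * Y) (hmax : R * Y ≤ lam * X) :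
    r + h * (√(R / r) - 1) < lam := by
  have hr : 0 < r := hh.trans hhr
  set σ := √(R / r)
  have hσ : 1 < σ := (Real.lt_sqrt zero_le_one).2 (by rw [one_pow, one_lt_div hr]; exact hrR)
  have hRσ : R = r * σ ^ 2 := by
    rw [Real.sq_sqrt (div_pos (hr.trans hrR) hr).le, mul_div_cancel₀ _ hr.ne']
  rcases lt_or_ge (σ * Y) X with hXY | hXY
  · have : (r + h * (σ - 1)) * Y < lam * Y := by nlinarith
    exact lt_of_mul_lt_mul_right this hY.le
  · have hlam : 0 ≤ lam := by nlinarith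
    have : r * σ * (σ * Y) ≤ lam * (σ * Y) := by nlinarith
    have : r * σ ≤ lam := le_of_mul_le_mul_right this (by positivity)
    nlinarith

lemma lt_sub_mul_one_sub_sqrt_div (hh : 0 < h) (hhr : h < r) (hrR : r < R) (hY : 0 < Y) (hmax : lam * X ≤ R * X - h * (X - Y)) (hmin : lam * Y ≤ r * X) :
    lam < R - h * (1 - √(r / R)) := by
  have hr : 0 < r := hh.trans hhr
  have hR : 0 < R := hr.trans hrR
  set τ := √(r / R)
  have hτ : τ < 1 := (Real.sqrt_lt' one_pos).2 (by rw [one_pow, div_lt_one hR]; exact hrR)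
  have hτ₀ : 0 < τ := Real.sqrt_pos.2 (by positivity)
  have hrτ : r = R * τ ^ 2 := by rw [Real.sq_sqrt (by positivity), mul_div_cancel₀ _ hR.ne']
  rcases lt_or_ge Y (τ * X) with hYX | hYX
  · have hX : 0 < X := by nlinarith
    have : lam * X < (R - h * (1 - τ)) * X := by nlinarith
    exact lt_of_mul_lt_mul_right this hX.le
  · have : lam * Y ≤ R * τ * Y := by nlinarith
    have : lam ≤ R * τ := le_of_mul_le_mul_right this hY
    nlinarith

end Bounds

section CauchyTensor

variable {n k : ℕ} {c : Fin n → ℝ} {a : ℝ}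

noncomputable def cauchyEntry (c : Fin n → ℝ) (i : Fin n) (t : Fin k → Fin n) : ℝ :=
  1 / (c i + ∑ j, c (t j))

noncomputable def cauchyRowSum (c : Fin n → ℝ) (k : ℕ) (i : Fin n) : ℝ :=
  ∑ t : Fin k → Fin n, cauchyEntry c i t

lemma add_sum_comp_pos (hc : ∀ i, 0 < c i) (i : Fin n) (t : Fin k → Fin n) :
    0 < c i + ∑ j, c (t j) :=
  add_pos_of_pos_of_nonneg (hc i) (sum_nonneg fun j _ ↦ (hc (t j)).le)

lemma cauchyEntry_nonneg (hc : ∀ i, 0 < c i) (i : Fin n) (t : Fin k → Fin n) :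
    0 ≤ cauchyEntry c i t :=
  (one_div_pos.2 (add_sum_comp_pos hc i t)).le

lemma one_div_le_cauchyEntry (hc : ∀ i, 0 < c i) (ha : ∀ i, c i ≤ a) (i : Fin n)
    (t : Fin k → Fin n) : 1 / ((k + 1) * a) ≤ cauchyEntry c i t := by
  refine one_div_le_one_div_of_le (add_sum_comp_pos hc i t) ?_
  calc c i + ∑ j, c (t j) ≤ a + ∑ _j : Fin k, a :=
        add_le_add (ha i) (sum_le_sum fun j _ ↦ ha (t j))
    _ = (k + 1) * a := by
        simp only [sum_const, card_univ, Fintype.card_fin, nsmul_eq_mul]; ring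

lemma cauchyRowSum_lt_of_lt (hc : ∀ i, 0 < c i) {i j : Fin n} (hij : c i < c j) :
    cauchyRowSum c k j < cauchyRowSum c k i :=
  haveI : Nonempty (Fin k → Fin n) := ⟨fun _ ↦ i⟩
  sum_lt_sum_of_nonempty univ_nonempty fun t _ ↦
    one_div_lt_one_div_of_lt (add_sum_comp_pos hc i t) (by linarith)

lemma exists_cauchyRowSum_lt_of_ne (hc : ∀ i, 0 < c i) {i j : Fin n} (hij : c i ≠ c j) :
    ∃ i' j', cauchyRowSum c k i' < cauchyRowSum c k j' := by
  rcases hij.lt_or_gt with hlt | hlt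
  · exact ⟨j, i, cauchyRowSum_lt_of_lt hc hlt⟩
  · exact ⟨i, j, cauchyRowSum_lt_of_lt hc hlt⟩

lemma one_div_lt_cauchyRowSum (hc : ∀ i, 0 < c i) (ha : ∀ i, c i ≤ a) (hn : 2 ≤ n)
    (hk : k ≠ 0) (i : Fin n) : 1 / ((k + 1) * a) < cauchyRowSum c k i := by
  have hh : 0 < 1 / ((k + 1 : ℝ) * a) := by
    have := (hc i).trans_le (ha i)
    positivity
  have hcard : (2 : ℝ) ≤ n ^ k := by
    exact_mod_cast hn.trans (Nat.le_self_pow hk n)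
  calc 1 / ((k + 1) * a) < 2 * (1 / ((k + 1) * a)) := by linarith
    _ ≤ n ^ k * (1 / ((k + 1) * a)) := by gcongr
    _ = ∑ _t : Fin k → Fin n, 1 / ((k + 1) * a) := by simp
    _ ≤ cauchyRowSum c k i := sum_le_sum fun t _ ↦ one_div_le_cauchyEntry hc ha i t

end CauchyTensor

theorem cauchy_tensor_largest_H_eigenvalue_bounds_general
    (m n : ℕ) (hm : 0 < m) (hme : Even m) (c : Fin n → ℝ)
    (hc : ∀ i, 0 < c i)
    (hdist : ∃ i j : Fin n, c i ≠ c j)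
    (rowSum : Fin n → ℝ)
    (hrow : ∀ i, rowSum i = ∑ t : Fin (m - 1) → Fin n, 1 / (c i + ∑ j, c (t j)))
    (R r abar : ℝ)
    (hR : ∀ i, rowSum i ≤ R) (hRmem : ∃ i, rowSum i = R)
    (hr : ∀ i, r ≤ rowSum i) (hrmem : ∃ i, rowSum i = r)
    (ha : ∀ i, c i ≤ abar)
    (lam : ℝ) (x : Fin n → ℝ) (hx : ∀ i, 0 < x i)
    (heig : ∀ i : Fin n,
        (∑ t : Fin (m - 1) → Fin n, (∏ j, x (t j)) / (c i + ∑ j, c (t j)))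
          = lam * (x i) ^ (m - 1)) :
    r + 1 / (m * abar) * (Real.sqrt (R / r) - 1) < lam ∧
      lam < R - 1 / (m * abar) * (1 - Real.sqrt (r / R)) := by
  obtain ⟨k, rfl⟩ : ∃ k, m = k + 1 := ⟨m - 1, by omega⟩
  have hk : k ≠ 0 := by rintro rfl; exact Nat.not_even_one hme
  rw [Nat.cast_add_one]
  obtain rfl : rowSum = cauchyRowSum c k := funext hrow
  replace heig : ∀ i, ∑ t : Fin k → Fin n, cauchyEntry c i t * ∏ j, x (t j) = lam * x i ^ k :=
    fun i ↦ (sum_congr rfl fun t _ ↦ one_div_mul_eq_div _ _).trans (heig i)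
  obtain ⟨i₀, rfl⟩ := hRmem
  obtain ⟨i₁, rfl⟩ := hrmem
  obtain ⟨i, j, hij⟩ := hdist
  have hn : 2 ≤ n := Fin.nontrivial_iff_two_le.1 (nontrivial_of_ne i j (ne_of_apply_ne c hij))
  obtain ⟨i', j', hlt⟩ := exists_cauchyRowSum_lt_of_ne (k := k) hc hij
  have hrR := (hr i').trans_lt (hlt.trans_le (hR j'))
  have hhr := one_div_lt_cauchyRowSum hc ha hn hk i₁
  have hh : 0 < 1 / ((k + 1 : ℝ) * abar) := by
    have := (hc i).trans_le (ha i)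
    positivity
  have hA : ∀ i (t : Fin k → Fin n), 0 ≤ cauchyEntry c i t := cauchyEntry_nonneg hc
  have hx₀ : ∀ i, 0 ≤ x i := fun i ↦ (hx i).le
  have : Nonempty (Fin n) := ⟨i⟩
  obtain ⟨p, hp⟩ := Finite.exists_max x
  obtain ⟨q, hq⟩ := Finite.exists_min x
  exact ⟨add_mul_sqrt_div_sub_one_lt hh hhr hrR (pow_pos (hx q) k)
      (pow_le_pow_left₀ (hx q).le (hq p) k)
      (le_eigenvalue_mul_min hA hx₀ heig hq (one_div_le_cauchyEntry hc ha q _) (hr q))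
      (sum_mul_min_le_eigenvalue_mul_max hA hx heig hp hq i₀),
    lt_sub_mul_one_sub_sqrt_div hh hhr hrR (pow_pos (hx q) k)
      (eigenvalue_mul_max_le hA hx₀ heig hp (one_div_le_cauchyEntry hc ha p _) (hR p))
      (eigenvalue_mul_min_le_sum_mul_max hA hx heig hp hq i₁)⟩

/-- Bounds on the largest H-eigenvalue (the eigenvalue with a positive
eigenvector) of a positive semi-definite even order symmetric Cauchy tensor whose
generating vector has at least two distinct entries:
`r + (1/(m·ā))(√(R/r) − 1) < λ < R − (1/(m·ā))(1 − √(r/R))`. -/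
theorem cauchy_tensor_largest_H_eigenvalue_bounds
    (m n : ℕ) (hm : 0 < m) (hme : Even m) (c : Fin n → ℝ)
    (hc : ∀ i, 0 < c i)
    (hdist : ∃ i j : Fin n, c i ≠ c j)
    (rowSum : Fin n → ℝ)
    (hrow : ∀ i, rowSum i = ∑ t : Fin (m - 1) → Fin n, 1 / (c i + ∑ j, c (t j)))
    (R r abar : ℝ)
    (hR : ∀ i, rowSum i ≤ R) (hRmem : ∃ i, rowSum i = R)
    (hr : ∀ i, r ≤ rowSum i) (hrmem : ∃ i, rowSum i = r)
    (ha : ∀ i, c i ≤ abar) (hamem : ∃ i, c i = abar)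
    (lam : ℝ) (x : Fin n → ℝ) (hx : ∀ i, 0 < x i)
    (heig : ∀ i : Fin n,
        (∑ t : Fin (m - 1) → Fin n, (∏ j, x (t j)) / (c i + ∑ j, c (t j)))
          = lam * (x i) ^ (m - 1)) :
    r + 1 / (m * abar) * (Real.sqrt (R / r) - 1) < lam ∧
      lam < R - 1 / (m * abar) * (1 - Real.sqrt (r / R)) :=
  cauchy_tensor_largest_H_eigenvalue_bounds_general m n hm hme c hc hdist rowSum hrow R r abar hR
    hRmem hr hrmem ha lam x hx heig
end

section
/- Let m be an odd positive integer and let 𝒞 be the order m dimension n symmetric Cauchy tensor with generating vector c ∈ ℝ^n satisfying c_i > 0 for all i. Suppose λ ∈ ℝ and x ∈ ℝ^n satisfy the Z-eigenvalue system Σ_{i_2,…,i_m=1}^n x_{i_2}⋯x_{i_m}/(c_i+c_{i_2}+⋯+c_{i_m}) = λ x_i for every i ∈ {1,…,n} and xᵀx = 1. If λ > 0 then x_i ≥ 0 for all i; if λ < 0 then x_i ≤ 0 for all i. -/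
/-!
Writing `1 / s = ∫₀¹ u ^ (s - 1) du` for every denominator turns the `i`-th entry of `𝒞 x^{m-1}`
into `∫₀¹ u ^ (cᵢ - 1) (∑ₖ xₖ u ^ cₖ) ^ (m - 1) du`, which is nonnegative because `m - 1` is even.
Hence `λ xᵢ ≥ 0` for every `i`, which forces the sign of `x` to agree with that of `λ`.
-/

open Finset intervalIntegral

lemma integral_rpow_sub_one_zero_one {s : ℝ} (hs : 0 < s) :
    ∫ u in (0 : ℝ)..1, u ^ (s - 1) = s⁻¹ := by
  rw [integral_rpow (Or.inl (by linarith)), sub_add_cancel, Real.one_rpow,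
    Real.zero_rpow hs.ne', sub_zero, one_div]

section CauchySum

variable {ι : Type*} [Fintype ι] (k : ℕ) (x c : ι → ℝ)

lemma pow_sum_mul_rpow {u : ℝ} (hu : 0 < u) :
    (∑ i, x i * u ^ c i) ^ k = ∑ t : Fin k → ι, (∏ j, x (t j)) * u ^ (∑ j, c (t j)) := by
  simp only [Fintype.sum_pow, prod_mul_distrib, Real.rpow_sum_of_pos hu]

theorem sum_prod_div_eq_integral (hc : ∀ i, 0 ≤ c i) {a : ℝ} (ha : 0 < a) :
    ∑ t : Fin k → ι, (∏ j, x (t j)) / (a + ∑ j, c (t j))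
      = ∫ u in (0 : ℝ)..1, u ^ (a - 1) * (∑ i, x i * u ^ c i) ^ k := by
  have hden : ∀ t : Fin k → ι, 0 < a + ∑ j, c (t j) := fun t =>
    add_pos_of_pos_of_nonneg ha (sum_nonneg fun j _ => hc (t j))
  calc ∑ t : Fin k → ι, (∏ j, x (t j)) / (a + ∑ j, c (t j))
      = ∑ t : Fin k → ι, ∫ u in (0 : ℝ)..1, (∏ j, x (t j)) * u ^ (a + ∑ j, c (t j) - 1) := by
        refine sum_congr rfl fun t _ => ?_
        rw [integral_const_mul, integral_rpow_sub_one_zero_one (hden t), div_eq_mul_inv]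
    _ = ∫ u in (0 : ℝ)..1, ∑ t : Fin k → ι, (∏ j, x (t j)) * u ^ (a + ∑ j, c (t j) - 1) :=
        (integral_finsetSum fun t _ =>
          (intervalIntegrable_rpow' (by linarith [hden t])).const_mul _).symm
    _ = ∫ u in (0 : ℝ)..1, u ^ (a - 1) * (∑ i, x i * u ^ c i) ^ k := by
        refine integral_congr_ae (Filter.Eventually.of_forall fun u hu => ?_)
        have hu0 : 0 < u := by
          rw [Set.uIoc_of_le zero_le_one] at hu
          exact hu.1
        rw [pow_sum_mul_rpow k x c hu0, mul_sum]
        refine sum_congr rfl fun t _ => ?_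
        rw [add_sub_right_comm, Real.rpow_add hu0]
        ring

theorem sum_prod_div_nonneg_of_even (hk : Even k) (hc : ∀ i, 0 ≤ c i) {a : ℝ} (ha : 0 < a) :
    0 ≤ ∑ t : Fin k → ι, (∏ j, x (t j)) / (a + ∑ j, c (t j)) := by
  rw [sum_prod_div_eq_integral k x c hc ha]
  exact integral_nonneg zero_le_one fun u hu =>
    mul_nonneg (Real.rpow_nonneg hu.1 _) (hk.pow_nonneg _)

end CauchySum

theorem cauchy_tensor_odd_Z_eigenvector_sign_general
    (m n : ℕ) (hmo : Odd m) (c : Fin n → ℝ)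
    (hc : ∀ i, 0 < c i)
    (lam : ℝ) (x : Fin n → ℝ)
    (heig : ∀ i : Fin n,
        (∑ t : Fin (m - 1) → Fin n, (∏ j, x (t j)) / (c i + ∑ j, c (t j)))
          = lam * x i) :
    (0 < lam → ∀ i, 0 ≤ x i) ∧ (lam < 0 → ∀ i, x i ≤ 0) := by
  have hsign : ∀ i, 0 ≤ lam * x i := fun i =>
    heig i ▸ sum_prod_div_nonneg_of_even (m - 1) x c (Nat.Odd.sub_odd hmo odd_one)
      (fun k => (hc k).le) (hc i)
  exact ⟨fun hlam i => nonneg_of_mul_nonneg_right (hsign i) hlam,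
    fun hlam i => nonpos_of_mul_nonneg_right (hsign i) hlam⟩

/-- For an odd order symmetric Cauchy tensor with positive generating
vector, a Z-eigenvector corresponding to a positive Z-eigenvalue is nonnegative, and
a Z-eigenvector corresponding to a negative Z-eigenvalue is nonpositive. -/
theorem cauchy_tensor_odd_Z_eigenvector_sign
    (m n : ℕ) (hm : 0 < m) (hmo : Odd m) (c : Fin n → ℝ)
    (hc : ∀ i, 0 < c i)
    (lam : ℝ) (x : Fin n → ℝ)
    (hnorm : (∑ i, (x i) ^ 2) = 1)
    (heig : ∀ i : Fin n,
        (∑ t : Fin (m - 1) → Fin n, (∏ j, x (t j)) / (c i + ∑ j, c (t j)))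
          = lam * x i) :
    (0 < lam → ∀ i, 0 ≤ x i) ∧ (lam < 0 → ∀ i, x i ≤ 0) :=
  cauchy_tensor_odd_Z_eigenvector_sign_general m n hmo c hc lam x heig
end

section
/- Let m be an odd positive integer and let 𝒞 be the order m dimension n symmetric Cauchy tensor with generating vector c ∈ ℝ^n whose entries are positive and mutually distinct (c_i > 0 for all i, c_i ≠ c_j for i ≠ j). Then 0 is not a Z-eigenvalue of 𝒞: there is no x ∈ ℝ^n with xᵀx = 1 such that Σ_{i_2,…,i_m=1}^n x_{i_2}⋯x_{i_m}/(c_i+c_{i_2}+⋯+c_{i_m}) = 0 for every i ∈ {1,…,n}. -/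
/-!
Write `f(s) = ∑ⱼ xⱼ s^{cⱼ}`. Expanding `f(s)^(m-1)` and integrating term by term with
`∫₀¹ s^(a-1) ds = 1/a` gives `(𝒞x^{m-1})ᵢ = ∫₀¹ s^{cᵢ-1} f(s)^{m-1} ds`. For odd `m` the
integrand is nonnegative and continuous on `(0,1)`, so a zero eigenvalue forces `f ≡ 0` there;
since the exponents `cⱼ` are distinct, the functions `s^{cⱼ}` are linearly independent
(divide by the smallest power and let `s → 0⁺`), hence `x = 0`, contradicting `xᵀx = 1`.
-/

open MeasureTheory Set Filter Topology

lemma integral_rpow_sub_one_s18 {a : ℝ} (ha : 0 < a) : ∫ s in (0 : ℝ)..1, s ^ (a - 1) = 1 / a := by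
  rw [integral_rpow (Or.inl (by linarith)), sub_add_cancel, Real.one_rpow,
    Real.zero_rpow ha.ne']
  ring

lemma eqOn_zero_of_integral_eq_zero_of_nonneg {f : ℝ → ℝ} {a b : ℝ} (hab : a ≤ b)
    (hfi : IntervalIntegrable f volume a b) (hfc : ContinuousOn f (Ioo a b))
    (hf : ∀ x ∈ Ioo a b, 0 ≤ f x) (h : ∫ x in a..b, f x = 0) : EqOn f 0 (Ioo a b) := by
  have hf' : 0 ≤ᵐ[volume.restrict (Ioc a b)] f := by
    rw [← restrict_Ioo_eq_restrict_Ioc]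
    exact ae_restrict_of_forall_mem measurableSet_Ioo hf
  have hae := (intervalIntegral.integral_eq_zero_iff_of_le_of_nonneg_ae hab hf' hfi).1 h
  rw [← restrict_Ioo_eq_restrict_Ioc] at hae
  exact Measure.eqOn_open_of_ae_eq hae isOpen_Ioo hfc continuousOn_const

section GeneralizedPolynomial

variable {ι : Type*}

lemma eq_zero_of_sum_mul_rpow_eq_zero_of_lt {S : Finset ι} {c x : ι → ℝ} {j₀ : ι} (hj₀ : j₀ ∈ S)
    (hlt : ∀ k ∈ S, k ≠ j₀ → c j₀ < c k) (h : ∀ s ∈ Ioo (0 : ℝ) 1, ∑ k ∈ S, x k * s ^ c k = 0) :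
    x j₀ = 0 := by
  set g : ℝ → ℝ := fun s => ∑ k ∈ S, x k * s ^ (c k - c j₀)
  have hg : ∀ s ∈ Ioo (0 : ℝ) 1, g s = 0 := fun s hs => by
    have : g s = (∑ k ∈ S, x k * s ^ c k) / s ^ c j₀ := by
      simp only [g, Finset.sum_div, Real.rpow_sub hs.1, mul_div_assoc]
    rw [this, h s hs, zero_div]
  have hg0 : g 0 = x j₀ := by
    refine (Finset.sum_eq_single j₀ (fun k hk hne => ?_) (absurd hj₀)).trans (by simp)
    rw [Real.zero_rpow (sub_pos.2 (hlt k hk hne)).ne', mul_zero]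
  have hcont : ContinuousAt g 0 := by
    refine tendsto_finsetSum S fun k hk => continuousAt_const.mul
      (Real.continuousAt_rpow_const _ _ (Or.inr ?_))
    rcases eq_or_ne k j₀ with rfl | hne
    · rw [sub_self]
    · exact (sub_pos.2 (hlt k hk hne)).le
  have hlim : Tendsto g (𝓝[>] 0) (𝓝 0) :=
    tendsto_const_nhds.congr' <| eventuallyEq_of_mem (Ioo_mem_nhdsGT one_pos) fun s hs =>
      (hg s hs).symm
  rw [← hg0]
  exact tendsto_nhds_unique (hcont.tendsto.mono_left nhdsWithin_le_nhds) hlim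

lemma eq_zero_of_sum_mul_rpow_eq_zero (S : Finset ι) {c x : ι → ℝ} (hc : InjOn c S)
    (h : ∀ s ∈ Ioo (0 : ℝ) 1, ∑ k ∈ S, x k * s ^ c k = 0) : ∀ j ∈ S, x j = 0 := by
  classical
  induction S using Finset.strongInduction with
  | H S ih =>
    intro j hj
    obtain ⟨j₀, hj₀, hmin⟩ := S.exists_min_image c ⟨j, hj⟩
    have hx₀ : x j₀ = 0 := eq_zero_of_sum_mul_rpow_eq_zero_of_lt hj₀
      (fun k hk hne => (hmin k hk).lt_of_ne fun heq => hne (hc hk hj₀ heq.symm)) h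
    rcases eq_or_ne j j₀ with rfl | hne
    · exact hx₀
    refine ih _ (Finset.erase_ssubset hj₀) (hc.mono (Finset.erase_subset _ _)) (fun s hs => ?_)
      j (Finset.mem_erase.2 ⟨hne, hj⟩)
    rw [← h s hs, ← Finset.add_sum_erase S _ hj₀, hx₀, zero_mul, zero_add]

lemma rpow_sub_one_mul_sum_mul_rpow_pow [Fintype ι] (k : ℕ) (a : ℝ) (c x : ι → ℝ) {s : ℝ}
    (hs : 0 < s) :
    s ^ (a - 1) * (∑ j, x j * s ^ c j) ^ k =
      ∑ t : Fin k → ι, (∏ l, x (t l)) * s ^ (a + ∑ l, c (t l) - 1) := by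
  rw [Fintype.sum_pow, Finset.mul_sum]
  refine Finset.sum_congr rfl fun t _ => ?_
  rw [Finset.prod_mul_distrib, ← Real.rpow_sum_of_pos hs, add_sub_right_comm,
    Real.rpow_add hs]
  ring

section CauchyIntegral

variable (k : ℕ) {a : ℝ} (ha : 0 < a) {c : ι → ℝ} (hc : ∀ j, 0 ≤ c j) (x : ι → ℝ)
include ha hc

lemma intervalIntegrable_mul_rpow_add_sum_sub_one (t : Fin k → ι) :
    IntervalIntegrable (fun s => (∏ l, x (t l)) * s ^ (a + ∑ l, c (t l) - 1)) volume 0 1 := by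
  have : 0 ≤ ∑ l, c (t l) := Finset.sum_nonneg fun l _ => hc (t l)
  exact (intervalIntegral.intervalIntegrable_rpow' (by linarith)).const_mul _

variable [Fintype ι]

lemma intervalIntegrable_rpow_sub_one_mul_sum_mul_rpow_pow :
    IntervalIntegrable (fun s => s ^ (a - 1) * (∑ j, x j * s ^ c j) ^ k) volume 0 1 := by
  refine IntervalIntegrable.congr (fun s hs => ?_)
    (IntervalIntegrable.sum Finset.univ fun t _ =>
      intervalIntegrable_mul_rpow_add_sum_sub_one k ha hc x t)
  rw [Finset.sum_apply, rpow_sub_one_mul_sum_mul_rpow_pow k a c x (by simpa using hs.1)]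

lemma integral_rpow_sub_one_mul_sum_mul_rpow_pow :
    ∫ s in (0 : ℝ)..1, s ^ (a - 1) * (∑ j, x j * s ^ c j) ^ k =
      ∑ t : Fin k → ι, (∏ l, x (t l)) / (a + ∑ l, c (t l)) := by
  rw [intervalIntegral.integral_congr_ae (ae_of_all _ fun s hs =>
      rpow_sub_one_mul_sum_mul_rpow_pow k a c x (by simpa using hs.1)),
    intervalIntegral.integral_finsetSum fun t _ =>
      intervalIntegrable_mul_rpow_add_sum_sub_one k ha hc x t]
  refine Finset.sum_congr rfl fun t _ => ?_
  have : 0 ≤ ∑ l, c (t l) := Finset.sum_nonneg fun l _ => hc (t l)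
  rw [intervalIntegral.integral_const_mul,
    integral_rpow_sub_one_s18 (by linarith), mul_one_div]

end CauchyIntegral

end GeneralizedPolynomial

theorem cauchy_tensor_odd_no_zero_Z_eigenvalue_general
    (m n : ℕ) (hmo : Odd m) (c : Fin n → ℝ)
    (hc : ∀ i, 0 < c i)
    (hdist : ∀ i j, i ≠ j → c i ≠ c j) :
    ¬ ∃ x : Fin n → ℝ, (∑ i, (x i) ^ 2) = 1 ∧
        ∀ i : Fin n,
          (∑ t : Fin (m - 1) → Fin n, (∏ j, x (t j)) / (c i + ∑ j, c (t j))) = 0 := by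
  rintro ⟨x, hx, heig⟩
  obtain ⟨i, hi⟩ : ∃ i, x i ≠ 0 := by
    by_contra! h
    simp [h] at hx
  have hc' : ∀ j, 0 ≤ c j := fun j => (hc j).le
  set F : ℝ → ℝ := fun s => s ^ (c i - 1) * (∑ j, x j * s ^ c j) ^ (m - 1)
  have hF : EqOn F 0 (Ioo 0 1) := by
    refine eqOn_zero_of_integral_eq_zero_of_nonneg zero_le_one
      (intervalIntegrable_rpow_sub_one_mul_sum_mul_rpow_pow _ (hc i) hc' x) ?_ ?_
      ((integral_rpow_sub_one_mul_sum_mul_rpow_pow _ (hc i) hc' x).trans (heig i))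
    · have hpow (p : ℝ) : ContinuousOn (fun s : ℝ => s ^ p) (Ioo 0 1) :=
        continuousOn_id.rpow_const fun s hs => Or.inl hs.1.ne'
      fun_prop
    · exact fun s hs => mul_nonneg (Real.rpow_nonneg hs.1.le _)
        ((Nat.Odd.sub_odd hmo odd_one).pow_nonneg _)
  have hf : ∀ s ∈ Ioo (0 : ℝ) 1, ∑ j, x j * s ^ c j = 0 := fun s hs =>
    eq_zero_of_pow_eq_zero <|
      (mul_eq_zero.1 (hF hs)).resolve_left (Real.rpow_pos_of_pos hs.1 _).ne'
  exact hi <| eq_zero_of_sum_mul_rpow_eq_zero _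
    (fun j _ k _ hjk => by_contra (hdist j k · hjk)) hf i (Finset.mem_univ i)

/-- An odd order symmetric Cauchy tensor whose generating vector has
positive and mutually distinct entries has no zero Z-eigenvalue. -/
theorem cauchy_tensor_odd_no_zero_Z_eigenvalue
    (m n : ℕ) (hm : 0 < m) (hmo : Odd m) (c : Fin n → ℝ)
    (hc : ∀ i, 0 < c i)
    (hdist : ∀ i j, i ≠ j → c i ≠ c j) :
    ¬ ∃ x : Fin n → ℝ, (∑ i, (x i) ^ 2) = 1 ∧
        ∀ i : Fin n,
          (∑ t : Fin (m - 1) → Fin n, (∏ j, x (t j)) / (c i + ∑ j, c (t j))) = 0 :=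
  cauchy_tensor_odd_no_zero_Z_eigenvalue_general m n hmo c hc hdist
end

section
/- Let m be a positive integer and let 𝒞 be the order m dimension n symmetric Cauchy tensor with generating vector c ∈ ℝ^n satisfying c_i > 0 for all i. Then for every x ∈ ℝ^n, 𝒞x^m = Σ_{i_1,…,i_m=1}^n x_{i_1}⋯x_{i_m}/(c_{i_1}+⋯+c_{i_m}) = ∫₀¹ ( Σ_{i=1}^n t^{c_i − 1/m} x_i )^m dt. -/
/-! Multinomial expansion turns `(∑ᵢ t ^ (cᵢ - 1/m) xᵢ) ^ m` into
`∑_{i : Fin m → Fin n} (∏ⱼ x_{i j}) t ^ (∑ⱼ c_{i j} - 1)`, the `m` exponents `-1/m` summing to `-1`.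
Each monomial integrates over `[0, 1]` to `(∏ⱼ x_{i j}) / ∑ⱼ c_{i j}` because
`∫₀¹ t ^ (a - 1) dt = 1 / a` for `a > 0`. -/

open Finset

theorem integral_rpow_sub_one_zero_one_s19 {a : ℝ} (ha : 0 < a) :
    ∫ t in (0 : ℝ)..1, t ^ (a - 1) = 1 / a := by
  rw [integral_rpow (Or.inl (by linarith)), sub_add_cancel, Real.one_rpow,
    Real.zero_rpow ha.ne', sub_zero]

theorem integral_sum_mul_rpow_sub_one_zero_one {ι : Type*} (s : Finset ι) (w b : ι → ℝ)
    (hb : ∀ i ∈ s, 0 < b i) :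
    ∫ t in (0 : ℝ)..1, ∑ i ∈ s, w i * t ^ (b i - 1) = ∑ i ∈ s, w i / b i := by
  rw [intervalIntegral.integral_finsetSum fun i hi =>
    (intervalIntegral.intervalIntegrable_rpow' (by linarith [hb i hi])).const_mul _]
  refine sum_congr rfl fun i hi => ?_
  rw [intervalIntegral.integral_const_mul, integral_rpow_sub_one_zero_one_s19 (hb i hi),
    mul_one_div]

theorem pow_sum_rpow_sub_inv_mul {ι : Type*} [Fintype ι] {m : ℕ} (hm : m ≠ 0) (c x : ι → ℝ)
    {t : ℝ} (ht : 0 < t) :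
    (∑ i, t ^ (c i - 1 / (m : ℝ)) * x i) ^ m
      = ∑ i : Fin m → ι, (∏ j, x (i j)) * t ^ (∑ j, c (i j) - 1) := by
  rw [Fintype.sum_pow]
  refine sum_congr rfl fun i _ => ?_
  have hexp : ∑ j, (c (i j) - 1 / (m : ℝ)) = ∑ j, c (i j) - 1 := by
    rw [sum_sub_distrib, sum_const, card_univ, Fintype.card_fin, nsmul_eq_mul]
    field_simp
  rw [prod_mul_distrib, ← Real.rpow_sum_of_pos ht, hexp, mul_comm]

/-- Integral representation of the Cauchy tensor form: for a generating
vector with positive entries,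
`𝒞xᵐ = ∫₀¹ (∑ᵢ t^(cᵢ − 1/m) xᵢ)ᵐ dt`. -/
theorem cauchy_tensor_integral_representation
    (m n : ℕ) (hm : 0 < m) (c : Fin n → ℝ)
    (hc : ∀ i, 0 < c i) :
    ∀ x : Fin n → ℝ,
      (∑ i : Fin m → Fin n, (∏ j, x (i j)) / (∑ j, c (i j)))
        = ∫ t in (0:ℝ)..1, (∑ i, t ^ (c i - 1 / (m : ℝ)) * x i) ^ m := by
  intro x
  have hsum_pos (i : Fin m → Fin n) : 0 < ∑ j, c (i j) :=
    sum_pos (fun j _ => hc (i j)) ⟨⟨0, hm⟩, mem_univ _⟩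
  have hexpand : ∀ᵐ t, t ∈ Set.uIoc (0 : ℝ) 1 →
      (∑ i, t ^ (c i - 1 / (m : ℝ)) * x i) ^ m
        = ∑ i : Fin m → Fin n, (∏ j, x (i j)) * t ^ (∑ j, c (i j) - 1) :=
    .of_forall fun t ht =>
      pow_sum_rpow_sub_inv_mul hm.ne' c x (by simpa using ht : t ∈ Set.Ioc 0 1).1
  rw [intervalIntegral.integral_congr_ae hexpand,
    integral_sum_mul_rpow_sub_one_zero_one _ _ _ fun i _ => hsum_pos i]
end
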